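/- Let p be a Lebesgue-measurable function on {(x,y) : 0 ≤ x ≤ y ≤ 1} with values in [0,1] satisfying p(x,y) = (1/(y−x)) ∫_x^y p(x,t)·p(t,y) dt for all 0 ≤ x < y ≤ 1. Then for almost every triple (x,y,z) ∈ [0,1]³ with x ≤ y ≤ z, p(x,z) = p(x,y)·p(y,z). -/

import Mathlib

/-!
Fix `x < z` and let `M k = ∫_x^z (t - x)^k p(x,t) p(t,z) dt`. Integrating
`(s - x)^k p(x,s) p(s,t) p(t,z)` over `x < s < t ≤ z` in both orders, and evaluating the inner
integral by the averaging identity (in `t`) or by induction (in `s`), gives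
`(z - x) M k - M (k + 1) = M (k + 1) / (k + 1)`, whence `M k = (z - x)^(k+1) p(x,z) / (k + 1)`.
So all moments of the bounded function `t ↦ p(x,t) p(t,z) - p(x,z)` on `(x, z]` vanish; by
Weierstrass approximation it integrates to zero against every continuous function, hence vanishes
almost everywhere there, and Fubini turns this statement about every slice `(x, ·, z)` into the
statement about almost every triple.
-/

open MeasureTheory Set Polynomial Function

theorem ae_restrict_eq_zero_of_forall_integral_eval_mul_eq_zero {μ : Measure ℝ}
    {s : Set ℝ} {a b : ℝ} {f : ℝ → ℝ} (hs : MeasurableSet s) (hsub : s ⊆ Icc a b)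
    (hf : IntegrableOn f s μ) (h : ∀ P : ℝ[X], ∫ t in s, P.eval t * f t ∂μ = 0) :
    ∀ᵐ t ∂μ.restrict s, f t = 0 := by
  have hint : ∀ g : ℝ → ℝ, Continuous g → IntegrableOn (fun t => g t * f t) s μ :=
    fun g hg => hf.continuousOn_mul_of_subset hg.continuousOn isCompact_Icc hs hsub
  have hcont : ∀ g : ℝ → ℝ, Continuous g → ∫ t in s, g t * f t ∂μ = 0 := by
    intro g hg
    refine eq_of_forall_dist_le fun ε hε => ?_
    set M := ∫ t in s, ‖f t‖ ∂μ
    have hM : 0 < M + 1 := by positivity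
    obtain ⟨P, hP⟩ := exists_polynomial_near_of_continuousOn a b g hg.continuousOn
      (ε / (M + 1)) (by positivity)
    calc dist (∫ t in s, g t * f t ∂μ) 0
        = ‖∫ t in s, (g t - P.eval t) * f t ∂μ‖ := by
          simp_rw [sub_mul]
          rw [integral_sub (hint g hg) (hint _ P.continuous), h, sub_zero, dist_zero_right]
      _ ≤ ∫ t in s, ε / (M + 1) * ‖f t‖ ∂μ := by
          refine norm_integral_le_of_norm_le (hf.norm.const_mul _) ?_
          filter_upwards [ae_restrict_mem hs] with t ht
          rw [norm_mul, Real.norm_eq_abs, abs_sub_comm]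
          gcongr
          exact (hP t (hsub ht)).le
      _ = ε * (M / (M + 1)) := by rw [integral_const_mul]; ring
      _ ≤ ε := mul_le_of_le_one_right hε.le ((div_le_one hM).2 (by linarith))
  refine ae_eq_zero_of_integral_contDiff_smul_eq_zero hf.locallyIntegrable fun g hg _ => ?_
  simpa only [smul_eq_mul] using hcont g hg.continuous

theorem ae_restrict_eq_zero_of_forall_integral_sub_pow_mul_eq_zero {μ : Measure ℝ}
    {s : Set ℝ} {a b : ℝ} {f : ℝ → ℝ} (c : ℝ) (hs : MeasurableSet s) (hsub : s ⊆ Icc a b)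
    (hf : IntegrableOn f s μ) (h : ∀ k : ℕ, ∫ t in s, (t - c) ^ k * f t ∂μ = 0) :
    ∀ᵐ t ∂μ.restrict s, f t = 0 := by
  refine ae_restrict_eq_zero_of_forall_integral_eval_mul_eq_zero hs hsub hf fun P => ?_
  set Q := P.comp (X + C c)
  have hPQ : ∀ t,
      P.eval t = ∑ i ∈ Finset.range (Q.natDegree + 1), Q.coeff i * (t - c) ^ i := by
    intro t
    rw [← eval_eq_sum_range]
    simp [Q]
  have hint : ∀ k : ℕ, IntegrableOn (fun t => (t - c) ^ k * f t) s μ := fun k =>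
    hf.continuousOn_mul_of_subset (by fun_prop) isCompact_Icc hs hsub
  simp_rw [hPQ, Finset.sum_mul, mul_assoc]
  rw [integral_finsetSum _ fun i _ => (hint i).const_mul _]
  simp [integral_const_mul, h]

theorem ae_prod_prod_of_forall_ae_middle {α β γ : Type*} [MeasurableSpace α]
    [MeasurableSpace β] [MeasurableSpace γ] {μ : Measure α} {ν : Measure β} {ρ : Measure γ}
    [SFinite ν] [SFinite ρ] {P : α × β × γ → Prop} (hP : MeasurableSet {q | P q})
    (h : ∀ x z, ∀ᵐ y ∂ν, P (x, y, z)) :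
    ∀ᵐ q ∂μ.prod (ν.prod ρ), P q := by
  rw [Measure.ae_prod_iff_ae_ae hP]
  refine ae_of_all _ fun x => ?_
  have hPx : MeasurableSet {w : β × γ | P (x, w)} := measurable_prodMk_left hP
  rw [Measure.ae_prod_iff_ae_ae hPx, Measure.ae_ae_comm hPx]
  exact ae_of_all _ (h x)

def triangle (a b : ℝ) : Set (ℝ × ℝ) := {q | a < q.1 ∧ q.1 < q.2 ∧ q.2 ≤ b}

theorem measurableSet_triangle (a b : ℝ) : MeasurableSet (triangle a b) :=
  (measurableSet_lt measurable_const measurable_fst).inter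
    ((measurableSet_lt measurable_fst measurable_snd).inter
      (measurableSet_le measurable_snd measurable_const))

theorem volume_triangle_lt_top (a b : ℝ) : volume (triangle a b) < ⊤ := by
  refine (measure_mono (t := Icc a b ×ˢ Icc a b) fun q hq => ?_).trans_lt
    (isCompact_Icc.prod isCompact_Icc).measure_lt_top
  exact ⟨⟨hq.1.le, hq.2.1.le.trans hq.2.2⟩, ⟨hq.1.trans hq.2.1 |>.le, hq.2.2⟩⟩

theorem integral_Ioc_integral_Ioc_swap {F : ℝ → ℝ → ℝ} {a b : ℝ}
    (hF : IntegrableOn (uncurry F) (triangle a b)) :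
    ∫ s in Ioc a b, ∫ t in Ioc s b, F s t = ∫ t in Ioc a b, ∫ s in Ioc a t, F s t := by
  have hfst : ∀ s, ∫ t, (triangle a b).indicator (uncurry F) (s, t) =
      (Ioc a b).indicator (fun s => ∫ t in Ioc s b, F s t) s := by
    intro s
    rw [indicator_apply, ← integral_indicator measurableSet_Ioc]
    split_ifs with hs
    · congr 1 with t
      by_cases ht : t ∈ Ioc s b <;> simp_all [triangle]
    · refine integral_eq_zero_of_ae (ae_of_all _ fun t => ?_)
      exact indicator_of_notMem (fun h => hs ⟨h.1, h.2.1.le.trans h.2.2⟩) _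
  have hsnd : ∀ t, ∫ s, (triangle a b).indicator (uncurry F) (s, t) =
      (Ioc a b).indicator (fun t => ∫ s in Ioc a t, F s t) t := by
    intro t
    rw [indicator_apply, integral_Ioc_eq_integral_Ioo, ← integral_indicator measurableSet_Ioo]
    split_ifs with ht
    · congr 1 with s
      by_cases hs : s ∈ Ioo a t <;> simp_all [triangle, indicator_apply]
    · refine integral_eq_zero_of_ae (ae_of_all _ fun s => ?_)
      exact indicator_of_notMem (fun h => ht ⟨h.1.trans h.2.1, h.2.2⟩) _
  have := integral_integral_swap (f := fun s t => (triangle a b).indicator (uncurry F) (s, t))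
    (hF.integrable_indicator (measurableSet_triangle a b))
  simpa only [hfst, hsnd, integral_indicator measurableSet_Ioc] using this

theorem integrableOn_of_forall_mem_unitInterval {α : Type*} [MeasurableSpace α] {μ : Measure α}
    {s : Set α} {f : α → ℝ} (hs : MeasurableSet s) (hμs : μ s ≠ ⊤) (hf : Measurable f)
    (h : ∀ a ∈ s, f a ∈ unitInterval) : IntegrableOn f s μ := by
  refine Measure.integrableOn_of_bounded hμs hf.aestronglyMeasurable (M := 1) ?_
  filter_upwards [ae_restrict_mem hs] with a ha
  rw [Real.norm_of_nonneg (h a ha).1]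
  exact (h a ha).2

theorem sub_pow_mem_unitInterval {x t : ℝ} (hxt : x ≤ t) (ht : t ≤ x + 1) (k : ℕ) :
    (t - x) ^ k ∈ unitInterval :=
  pow_mem (S := unitInterval.submonoid) (show t - x ∈ unitInterval by constructor <;> linarith) k

section Kernel

variable {p : ℝ → ℝ → ℝ}

theorem setIntegral_Ioc_mul_eq
    (heq : ∀ x y : ℝ, 0 ≤ x → x < y → y ≤ 1 →
      p x y = (1 / (y - x)) * ∫ t in x..y, p x t * p t y)
    {x y : ℝ} (hx : 0 ≤ x) (hxy : x ≤ y) (hy : y ≤ 1) :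
    ∫ t in Ioc x y, p x t * p t y = (y - x) * p x y := by
  rcases hxy.eq_or_lt with rfl | hlt
  · simp
  · rw [heq x y hx hlt hy, intervalIntegral.integral_of_le hlt.le]
    field_simp [sub_ne_zero.2 hlt.ne']

theorem integrableOn_sub_pow_mul (hmeas : Measurable (uncurry p))
    (hrange : ∀ x y : ℝ, 0 ≤ x → x ≤ y → y ≤ 1 → p x y ∈ Set.Icc (0:ℝ) 1)
    {x z : ℝ} (hx : 0 ≤ x) (hz : z ≤ 1) (k : ℕ) :
    IntegrableOn (fun t => (t - x) ^ k * (p x t * p t z)) (Ioc x z) := by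
  exact integrableOn_of_forall_mem_unitInterval measurableSet_Ioc measure_Ioc_lt_top.ne
    (by fun_prop) fun t ht => unitInterval.mul_mem
      (sub_pow_mem_unitInterval ht.1.le (by linarith [ht.2]) k) (unitInterval.mul_mem
        (hrange x t hx ht.1.le (ht.2.trans hz)) (hrange t z (hx.trans ht.1.le) ht.2 hz))

theorem setIntegral_sub_pow_mul (hmeas : Measurable (uncurry p))
    (hrange : ∀ x y : ℝ, 0 ≤ x → x ≤ y → y ≤ 1 → p x y ∈ Set.Icc (0:ℝ) 1)
    (heq : ∀ x y : ℝ, 0 ≤ x → x < y → y ≤ 1 →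
      p x y = (1 / (y - x)) * ∫ t in x..y, p x t * p t y)
    (k : ℕ) {x z : ℝ} (hx : 0 ≤ x) (hxz : x ≤ z) (hz : z ≤ 1) :
    ∫ t in Ioc x z, (t - x) ^ k * (p x t * p t z) = (z - x) ^ (k + 1) * p x z / (k + 1) := by
  induction k generalizing z with
  | zero => simpa using setIntegral_Ioc_mul_eq heq hx hxz hz
  | succ k ih =>
    set M : ℕ → ℝ := fun j => ∫ t in Ioc x z, (t - x) ^ j * (p x t * p t z)
    have hF : IntegrableOn (uncurry fun s t => (s - x) ^ k * p x s * (p s t * p t z))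
        (triangle x z) := by
      refine integrableOn_of_forall_mem_unitInterval (measurableSet_triangle x z)
        (volume_triangle_lt_top x z).ne (by fun_prop) ?_
      rintro ⟨s, t⟩ ⟨hxs, hst, htz⟩
      exact unitInterval.mul_mem
        (unitInterval.mul_mem (sub_pow_mem_unitInterval hxs.le (by linarith) k)
          (hrange x s hx hxs.le (by linarith)))
        (unitInterval.mul_mem (hrange s t (by linarith) hst.le (by linarith))
          (hrange t z (by linarith) htz hz))
    have hfst : ∫ s in Ioc x z, ∫ t in Ioc s z, (s - x) ^ k * p x s * (p s t * p t z)
        = (z - x) * M k - M (k + 1) := by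
      rw [← integral_const_mul,
        ← integral_sub ((integrableOn_sub_pow_mul hmeas hrange hx hz k).const_mul _)
          (integrableOn_sub_pow_mul hmeas hrange hx hz (k + 1))]
      refine setIntegral_congr_fun measurableSet_Ioc fun s hs => ?_
      rw [integral_const_mul, setIntegral_Ioc_mul_eq heq (hx.trans hs.1.le) hs.2 hz]
      ring
    have hsnd : ∫ t in Ioc x z, ∫ s in Ioc x t, (s - x) ^ k * p x s * (p s t * p t z)
        = M (k + 1) / (k + 1) := by
      rw [← integral_div]
      refine setIntegral_congr_fun measurableSet_Ioc fun t ht => ?_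
      calc ∫ s in Ioc x t, (s - x) ^ k * p x s * (p s t * p t z)
          = (∫ s in Ioc x t, (s - x) ^ k * (p x s * p s t)) * p t z := by
            rw [← integral_mul_const]; congr 1 with s; ring
        _ = _ := by rw [ih ht.1.le (ht.2.trans hz)]; ring
    have hMk : M k = (z - x) ^ (k + 1) * p x z / (k + 1) := ih hxz hz
    have hrec := hfst.symm.trans ((integral_Ioc_integral_Ioc_swap hF).trans hsnd)
    rw [hMk] at hrec
    change M (k + 1) = _
    push_cast
    field_simp at hrec ⊢
    linear_combination -hrec

theorem ae_restrict_mul_eq (hmeas : Measurable (uncurry p))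
    (hrange : ∀ x y : ℝ, 0 ≤ x → x ≤ y → y ≤ 1 → p x y ∈ Set.Icc (0:ℝ) 1)
    (heq : ∀ x y : ℝ, 0 ≤ x → x < y → y ≤ 1 →
      p x y = (1 / (y - x)) * ∫ t in x..y, p x t * p t y)
    {x z : ℝ} (hx : 0 ≤ x) (hxz : x ≤ z) (hz : z ≤ 1) :
    ∀ᵐ t ∂volume.restrict (Ioc x z), p x t * p t z = p x z := by
  have hmom : ∀ k : ℕ, ∫ t in Ioc x z, (t - x) ^ k * (p x t * p t z - p x z) = 0 := by
    intro k
    have hpow : ∫ t in Ioc x z, (t - x) ^ k = (z - x) ^ (k + 1) / (k + 1) := by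
      rw [← intervalIntegral.integral_of_le hxz,
        intervalIntegral.integral_comp_sub_right (fun u => u ^ k) x]
      simp [integral_pow]
    simp_rw [mul_sub]
    rw [integral_sub (integrableOn_sub_pow_mul hmeas hrange hx hz k)
      (Continuous.integrableOn_Ioc (by fun_prop)),
      integral_mul_const, hpow, setIntegral_sub_pow_mul hmeas hrange heq k hx hxz hz]
    ring
  have hprod : IntegrableOn (fun t => p x t * p t z) (Ioc x z) := by
    simpa using integrableOn_sub_pow_mul hmeas hrange hx hz 0
  have hint : IntegrableOn (fun t => p x t * p t z - p x z) (Ioc x z) :=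
    hprod.sub (integrableOn_const measure_Ioc_lt_top.ne)
  filter_upwards [ae_restrict_eq_zero_of_forall_integral_sub_pow_mul_eq_zero x
    measurableSet_Ioc Ioc_subset_Icc_self hint hmom] with t ht
  exact sub_eq_zero.1 ht

theorem ae_eq_mul_of_le (hmeas : Measurable (uncurry p))
    (hrange : ∀ x y : ℝ, 0 ≤ x → x ≤ y → y ≤ 1 → p x y ∈ Set.Icc (0:ℝ) 1)
    (heq : ∀ x y : ℝ, 0 ≤ x → x < y → y ≤ 1 →
      p x y = (1 / (y - x)) * ∫ t in x..y, p x t * p t y)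
    (x z : ℝ) : ∀ᵐ y, 0 ≤ x ∧ x ≤ y ∧ y ≤ z ∧ z ≤ 1 → p x z = p x y * p y z := by
  by_cases h : 0 ≤ x ∧ x ≤ z ∧ z ≤ 1
  · obtain ⟨hx, hxz, hz⟩ := h
    have hslice := ae_restrict_mul_eq hmeas hrange heq hx hxz hz
    filter_upwards [(ae_restrict_iff' measurableSet_Ioc).1 hslice, Measure.ae_ne volume x]
      with y hy hyx ⟨_, hxy, hyz, _⟩
    exact (hy ⟨hxy.lt_of_ne' hyx, hyz⟩).symm
  · exact ae_of_all _ fun y ⟨hx, hxy, hyz, hz⟩ => absurd ⟨hx, hxy.trans hyz, hz⟩ h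

end Kernel

/-- Lemma: a measurable `p : {(x,y) : 0 ≤ x ≤ y ≤ 1} → [0,1]` satisfying
`p(x,y) = (1/(y−x)) ∫_x^y p(x,t) p(t,y) dt` is multiplicative almost everywhere:
`p(x,z) = p(x,y) p(y,z)` for almost every `x ≤ y ≤ z`. -/
theorem stmt18 (p : ℝ → ℝ → ℝ) (hmeas : Measurable (Function.uncurry p))
    (hrange : ∀ x y : ℝ, 0 ≤ x → x ≤ y → y ≤ 1 → p x y ∈ Set.Icc (0:ℝ) 1)
    (heq : ∀ x y : ℝ, 0 ≤ x → x < y → y ≤ 1 →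
      p x y = (1 / (y - x)) * ∫ t in x..y, p x t * p t y) :
    ∀ᵐ q : ℝ × ℝ × ℝ ∂(MeasureTheory.volume : Measure (ℝ × ℝ × ℝ)),
      (0 ≤ q.1 ∧ q.1 ≤ q.2.1 ∧ q.2.1 ≤ q.2.2 ∧ q.2.2 ≤ 1) →
        p q.1 q.2.2 = p q.1 q.2.1 * p q.2.1 q.2.2 := by
  refine ae_prod_prod_of_forall_ae_middle ?_ (ae_eq_mul_of_le hmeas hrange heq)
  measurability
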